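/- Let G be a nilpotent group, π a set of primes, and for each i let G_i = I_π(γ_i(G)) be the π-isolator of the i-th term of the lower central series of G. Then [G_i, G_j] ≤ G_{i+j} for all natural numbers i, j. -/

import Mathlib

/-!
Pass to `Q = G / γ_{i+j+2}`, which is nilpotent and in which `x ^ m` and `y ^ n` commute
because `[γ_{i+1}, γ_{j+1}] ≤ γ_{i+j+2}` (three subgroups lemma). In a nilpotent group the
π-torsion elements form a normal subgroup `τ`: by induction on the class, the last nontrivial
term of the lower central series is central and generated by commutators `⁅p, g⁆`, which are
π-torsion because `g ↦ ⁅p, g⁆` is then a homomorphism. The quotient `Q / τ` has no π-torsion,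
and in a nilpotent group without `n`-torsion an element whose `n`-th power commutes with `y`
commutes with `y` itself. Hence `⁅x, y⁆` is π-torsion modulo `γ_{i+j+2}`.
-/

def IsPiNumber (π : Set ℕ) (n : ℕ) : Prop :=
  0 < n ∧ ∀ p : ℕ, p.Prime → p ∣ n → p ∈ π

open Group
open scoped commutatorElement

namespace IsPiNumber

variable {π : Set ℕ}

theorem one : IsPiNumber π 1 :=
  ⟨one_pos, fun _ hp hdvd => absurd (Nat.dvd_one.mp hdvd) hp.ne_one⟩

theorem mul {m n : ℕ} (hm : IsPiNumber π m) (hn : IsPiNumber π n) :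
    IsPiNumber π (m * n) := by
  refine ⟨Nat.mul_pos hm.1 hn.1, fun p hp hdvd => ?_⟩
  rcases hp.dvd_mul.mp hdvd with h | h
  · exact hm.2 p hp h
  · exact hn.2 p hp h

end IsPiNumber

def IsPiTorsion (π : Set ℕ) {G : Type*} [Monoid G] (g : G) : Prop :=
  ∃ n, IsPiNumber π n ∧ g ^ n = 1

namespace IsPiTorsion

variable {π : Set ℕ} {M N G : Type*} [Monoid M] [Monoid N] [Group G]

theorem one : IsPiTorsion π (1 : M) :=
  ⟨1, .one, one_pow 1⟩

theorem inv {g : G} (h : IsPiTorsion π g) : IsPiTorsion π g⁻¹ :=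
  let ⟨n, hn, hg⟩ := h
  ⟨n, hn, by rw [inv_pow, hg, inv_one]⟩

theorem map {g : M} (h : IsPiTorsion π g) (f : M →* N) : IsPiTorsion π (f g) :=
  let ⟨n, hn, hg⟩ := h
  ⟨n, hn, by rw [← map_pow, hg, map_one]⟩

theorem map_iff {f : M →* N} (hf : Function.Injective f) {g : M} :
    IsPiTorsion π (f g) ↔ IsPiTorsion π g :=
  ⟨fun ⟨n, hn, hg⟩ => ⟨n, hn, hf (by rwa [map_pow, map_one])⟩, fun h => h.map f⟩

theorem of_pow {g : M} {n : ℕ} (hn : IsPiNumber π n) (h : IsPiTorsion π (g ^ n)) :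
    IsPiTorsion π g :=
  let ⟨r, hr, hg⟩ := h
  ⟨n * r, hn.mul hr, by rw [pow_mul, hg]⟩

theorem _root_.Commute.isPiTorsion_mul {x y : M} (hxy : Commute x y) (hx : IsPiTorsion π x)
    (hy : IsPiTorsion π y) : IsPiTorsion π (x * y) :=
  let ⟨m, hm, hxm⟩ := hx
  let ⟨n, hn, hyn⟩ := hy
  ⟨m * n, hm.mul hn, by rw [hxy.mul_pow, pow_mul, hxm, mul_comm, pow_mul, hyn, one_pow, one_pow,
    one_mul]⟩

end IsPiTorsion

theorem Commute.eq_of_pow_eq {G : Type*} [Group G] {n : ℕ} (hn : ∀ g : G, g ^ n = 1 → g = 1)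
    {a b : G} (hab : Commute a b) (h : a ^ n = b ^ n) : a = b :=
  mul_inv_eq_one.mp (hn _ (by rw [hab.inv_right.mul_pow, inv_pow, h, mul_inv_cancel]))

theorem QuotientGroup.mk_commutatorElement {G : Type*} [Group G] (N : Subgroup G) [N.Normal]
    (a b : G) : ((⁅a, b⁆ : G) : G ⧸ N) = ⁅(a : G ⧸ N), (b : G ⧸ N)⁆ :=
  map_commutatorElement (QuotientGroup.mk' N) a b

namespace Subgroup

variable {G : Type*} [Group G]

theorem commutator_commutator_le_of_rotate {N : Subgroup G} [N.Normal] {H₁ H₂ H₃ : Subgroup G}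
    (h₁ : ⁅⁅H₂, H₃⁆, H₁⁆ ≤ N) (h₂ : ⁅⁅H₃, H₁⁆, H₂⁆ ≤ N) : ⁅⁅H₁, H₂⁆, H₃⁆ ≤ N := by
  simp only [← QuotientGroup.ker_mk' N, ← map_eq_bot_iff, map_commutator] at *
  exact commutator_commutator_eq_bot_of_rotate h₁ h₂

theorem commutator_lowerCentralSeries_le (i j : ℕ) :
    ⁅(⊤ : Subgroup G).lowerCentralSeries i, (⊤ : Subgroup G).lowerCentralSeries j⁆ ≤
      (⊤ : Subgroup G).lowerCentralSeries (i + j + 1) := by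
  induction j generalizing i with
  | zero => rfl
  | succ j ih =>
    rw [lowerCentralSeries_succ, commutator_comm]
    apply commutator_commutator_le_of_rotate
    · rw [commutator_comm ⊤, ← lowerCentralSeries_succ]
      exact (ih (i + 1)).trans_eq (by congr 1; omega)
    · exact (commutator_mono (ih i) le_rfl).trans_eq
        (by rw [← lowerCentralSeries_succ]; rfl)

theorem lowerCentralSeries_quotient_eq_bot (c : ℕ) :
    (⊤ : Subgroup (G ⧸ (⊤ : Subgroup G).lowerCentralSeries c)).lowerCentralSeries c = ⊥ := by
  rw [← map_top_of_surjective _ (QuotientGroup.mk'_surjective _), ← map_lowerCentralSeries,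
    map_eq_bot_iff, QuotientGroup.ker_mk']

instance (c : ℕ) : IsNilpotent (G ⧸ (⊤ : Subgroup G).lowerCentralSeries c) :=
  nilpotent_iff_lowerCentralSeries.mpr ⟨c, lowerCentralSeries_quotient_eq_bot c⟩

theorem commutator_closure_self_le {N : Subgroup G} [N.Normal] {S : Set G}
    (hS : ∀ a ∈ S, ∀ b ∈ S, ⁅a, b⁆ ∈ N) : ⁅closure S, closure S⁆ ≤ N := by
  rw [← QuotientGroup.ker_mk' N, ← map_eq_bot_iff, map_commutator, MonoidHom.map_closure,
    commutator_self_eq_bot_iff]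
  refine isMulCommutative_closure ?_
  rintro _ ⟨a, ha, rfl⟩ _ ⟨b, hb, rfl⟩
  rw [← commutatorElement_eq_one_iff_mul_comm, ← map_commutatorElement, ← MonoidHom.mem_ker,
    QuotientGroup.ker_mk']
  exact hS a ha b hb

theorem lowerCentralSeries_succ_le_of_commutator_le {K : Subgroup G}
    (hK : ⁅K, K⁆ ≤ (⊤ : Subgroup G).lowerCentralSeries 2) (r : ℕ) :
    K.lowerCentralSeries (r + 1) ≤ (⊤ : Subgroup G).lowerCentralSeries (r + 2) := by
  induction r with
  | zero => exact hK
  | succ r ih => exact commutator_mono ih le_top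

section PiTorsion

variable {π : Set ℕ}

theorem isPiTorsion_of_mem_closure_of_subset_center {S : Set G} (hSc : S ⊆ center G)
    (hS : ∀ s ∈ S, IsPiTorsion π s) {g : G} (hg : g ∈ closure S) : IsPiTorsion π g := by
  have hc : closure S ≤ center G := (closure_le _).mpr hSc
  induction hg using closure_induction with
  | mem x hx => exact hS x hx
  | one => exact .one
  | mul x y hx _ ihx ihy =>
    exact Commute.isPiTorsion_mul (mem_center_iff.mp (hc hx) y).symm ihx ihy
  | inv x _ ih => exact ih.inv

def commutatorElementHom (p : G) (hp : ∀ g, ⁅p, g⁆ ∈ center G) : G →* G :=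
  MonoidHom.mk' (fun g => ⁅p, g⁆) fun a b => by
    rw [commutatorElement_mul_right_eq_mul_conj, mul_assoc _ a, mem_center_iff.mp (hp b) a,
      mul_assoc, mul_inv_cancel_right]

theorem isPiTorsion_commutatorElement_of_closure_eq_top {S : Set G} (hS : closure S = ⊤)
    (hST : ∀ s ∈ S, IsPiTorsion π s) {p : G} (hp : ∀ g, ⁅p, g⁆ ∈ center G) (g : G) :
    IsPiTorsion π ⁅p, g⁆ := by
  set f := commutatorElementHom p hp
  have hg : f g ∈ closure (f '' S) := by
    rw [← MonoidHom.map_closure, hS]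
    exact mem_map_of_mem f (mem_top g)
  refine isPiTorsion_of_mem_closure_of_subset_center ?_ ?_ hg
  · rintro _ ⟨s, -, rfl⟩
    exact hp s
  · rintro _ ⟨s, hs, rfl⟩
    exact (hST s hs).map f

theorem isPiTorsion_of_closure_eq_top {c : ℕ} (hc : (⊤ : Subgroup G).lowerCentralSeries c = ⊥)
    {S : Set G} (hS : closure S = ⊤) (hST : ∀ s ∈ S, IsPiTorsion π s) (g : G) :
    IsPiTorsion π g := by
  induction c generalizing G with
  | zero =>
    rw [lowerCentralSeries_zero, eq_bot_iff] at hc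
    rw [mem_bot.mp (hc (mem_top g))]
    exact .one
  | succ c ih =>
    set Γ := (⊤ : Subgroup G).lowerCentralSeries c
    have hΓ : Γ ≤ center G := commutator_top_right_eq_bot_iff_le_center.mp hc
    have hΓT : ∀ γ ∈ Γ, IsPiTorsion π γ := by
      cases c with
      | zero =>
        intro γ _
        refine isPiTorsion_of_mem_closure_of_subset_center ?_ hST (hS ▸ mem_top γ)
        exact subset_closure.trans (hS.trans_le hΓ)
      | succ c =>
        intro γ hγ
        refine isPiTorsion_of_mem_closure_of_subset_center ?_ ?_ hγ
        · rintro _ ⟨p, hp, q, -, rfl⟩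
          exact hΓ (commutator_mem_commutator hp (mem_top q))
        · rintro _ ⟨p, hp, q, -, rfl⟩
          exact isPiTorsion_commutatorElement_of_closure_eq_top hS hST
            (fun g => hΓ (commutator_mem_commutator hp (mem_top g))) q
    have hSΓ : closure ((↑) '' S : Set (G ⧸ Γ)) = ⊤ := by
      rw [← QuotientGroup.coe_mk', ← MonoidHom.map_closure, hS,
        map_top_of_surjective _ (QuotientGroup.mk'_surjective Γ)]
    obtain ⟨r, hr, hgr⟩ := ih (lowerCentralSeries_quotient_eq_bot c) hSΓ
      (by rintro _ ⟨s, hs, rfl⟩; exact (hST s hs).map (QuotientGroup.mk' Γ)) (g : G ⧸ Γ)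
    rw [← QuotientGroup.mk_pow, QuotientGroup.eq_one_iff] at hgr
    exact .of_pow hr (hΓT _ hgr)

theorem isPiTorsion_of_mem_closure [IsNilpotent G] {S : Set G} (hST : ∀ s ∈ S, IsPiTorsion π s)
    {g : G} (hg : g ∈ closure S) : IsPiTorsion π g := by
  obtain ⟨c, hc⟩ := nilpotent_iff_lowerCentralSeries.mp (inferInstance : IsNilpotent (closure S))
  have := isPiTorsion_of_closure_eq_top hc closure_closure_coe_preimage
    (fun s hs => (IsPiTorsion.map_iff (closure S).subtype_injective).mp (hST s hs)) ⟨g, hg⟩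
  exact this.map (closure S).subtype

def piTorsion (π : Set ℕ) (G : Type*) [Group G] [IsNilpotent G] : Subgroup G where
  carrier := {g | IsPiTorsion π g}
  one_mem' := .one
  mul_mem' hx hy :=
    isPiTorsion_of_mem_closure (fun _ h => h) (mul_mem (subset_closure hx) (subset_closure hy))
  inv_mem' := IsPiTorsion.inv

theorem mem_piTorsion [IsNilpotent G] {g : G} : g ∈ piTorsion π G ↔ IsPiTorsion π g :=
  Iff.rfl

instance [IsNilpotent G] : (piTorsion π G).Normal :=
  ⟨fun _ hn g => (mem_piTorsion.mp hn).map (MulAut.conj g).toMonoidHom⟩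

theorem eq_one_of_pow_eq_one_of_quotient_piTorsion [IsNilpotent G] {n : ℕ}
    (hn : IsPiNumber π n) (g : G ⧸ piTorsion π G) (h : g ^ n = 1) : g = 1 := by
  induction g using QuotientGroup.induction_on with
  | H g =>
    rw [← QuotientGroup.mk_pow, QuotientGroup.eq_one_iff] at h
    exact (QuotientGroup.eq_one_iff g).mpr (.of_pow hn h)

theorem commute_of_commute_pow_left [IsNilpotent G] {n : ℕ} (hn : ∀ g : G, g ^ n = 1 → g = 1)
    {x y : G} (h : Commute (x ^ n) y) : Commute x y := by
  obtain ⟨c, hc⟩ := nilpotent_iff_lowerCentralSeries.mp ‹IsNilpotent G›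
  induction c generalizing G with
  | zero =>
    rw [lowerCentralSeries_zero, eq_bot_iff] at hc
    rw [mem_bot.mp (hc (mem_top x))]
    exact .one_left y
  | succ c ih =>
    rcases c with _ | c
    · rw [← commutatorElement_eq_one_iff_commute, ← mem_bot, ← hc]
      exact commutator_mem_commutator (mem_top x) (mem_top y)
    -- `y * x * y⁻¹` and `x` are `n`-th roots of `x ^ n` in `K`, whose class is one less.
    set K := closure {x, ⁅y, x⁆}
    have hK : ⁅K, K⁆ ≤ (⊤ : Subgroup G).lowerCentralSeries 2 := by
      have hw : ⁅⁅y, x⁆, x⁆ ∈ (⊤ : Subgroup G).lowerCentralSeries 2 :=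
        commutator_mem_commutator (commutator_mem_commutator (mem_top y) (mem_top x)) (mem_top x)
      refine commutator_closure_self_le ?_
      rintro a (rfl | rfl) b (rfl | rfl)
      · simp
      · rw [← commutatorElement_inv]
        exact inv_mem hw
      · exact hw
      · simp
    have hKc : (⊤ : Subgroup K).lowerCentralSeries (c + 1) = ⊥ := by
      rw [← map_eq_bot_iff_of_injective _ K.subtype_injective, top_subtype_lowerCentralSeries,
        eq_bot_iff, ← hc]
      exact lowerCentralSeries_succ_le_of_commutator_le hK c
    have hnK : ∀ g : K, g ^ n = 1 → g = 1 := fun g hg =>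
      Subtype.ext (hn g (by simpa using congrArg Subtype.val hg))
    have hxK : x ∈ K := subset_closure (by simp)
    have hconjK : y * x * y⁻¹ ∈ K := by
      rw [← MulAut.conj_apply, conj_eq_commutatorElement_mul]
      exact mul_mem (subset_closure (by simp)) hxK
    have hpow : (⟨y * x * y⁻¹, hconjK⟩ : K) ^ n = ⟨x, hxK⟩ ^ n := by
      ext
      simp only [SubgroupClass.coe_pow, conj_pow, ← h.eq, mul_inv_cancel_right]
    have hcomm : Commute (⟨y * x * y⁻¹, hconjK⟩ : K) ⟨x, hxK⟩ :=
      ih hnK (hpow ▸ (Commute.refl _).pow_left n) hKc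
    have hconj : y * x * y⁻¹ = x := congrArg Subtype.val (hcomm.eq_of_pow_eq hnK hpow)
    exact (mul_inv_eq_iff_eq_mul.mp hconj).symm

theorem isPiTorsion_commutatorElement_of_commute_pow [IsNilpotent G] {m n : ℕ}
    (hm : IsPiNumber π m) (hn : IsPiNumber π n) {x y : G} (h : Commute (x ^ m) (y ^ n)) :
    IsPiTorsion π ⁅x, y⁆ := by
  have h' : Commute ((x : G ⧸ piTorsion π G) ^ m) ((y : G ⧸ piTorsion π G) ^ n) := by
    simpa only [QuotientGroup.coe_mk', QuotientGroup.mk_pow] using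
      h.map (QuotientGroup.mk' (piTorsion π G))
  have hx : Commute (x : G ⧸ piTorsion π G) (y ^ n) :=
    commute_of_commute_pow_left (eq_one_of_pow_eq_one_of_quotient_piTorsion hm) h'
  have hxy : Commute (x : G ⧸ piTorsion π G) y :=
    (commute_of_commute_pow_left (eq_one_of_pow_eq_one_of_quotient_piTorsion hn) hx.symm).symm
  rw [← mem_piTorsion, ← QuotientGroup.eq_one_iff, QuotientGroup.mk_commutatorElement]
  exact hxy.commutator_eq

end PiTorsion

end Subgroup

/-- `(⊤ : Subgroup G).lowerCentralSeries i` is `γ_{i+1}(G)` in the paper's indexing, so the claim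
`[G_i, G_j] ≤ G_{i+j}` (for `i, j ≥ 1`) becomes the statement below. -/
theorem isolator_commutator_le_general (G : Type*) [Group G]
    (π : Set ℕ) (i j : ℕ) (Gi Gj Gk : Subgroup G)
    (hGi : (Gi : Set G) = {g : G | ∃ n : ℕ, IsPiNumber π n ∧ g ^ n ∈ (⊤ : Subgroup G).lowerCentralSeries i})
    (hGj : (Gj : Set G) = {g : G | ∃ n : ℕ, IsPiNumber π n ∧ g ^ n ∈ (⊤ : Subgroup G).lowerCentralSeries j})
    (hGk : (Gk : Set G) =
      {g : G | ∃ n : ℕ, IsPiNumber π n ∧ g ^ n ∈ (⊤ : Subgroup G).lowerCentralSeries (i + j + 1)}) :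
    ⁅Gi, Gj⁆ ≤ Gk := by
  rw [Subgroup.commutator_le]
  intro x hx y hy
  rw [← SetLike.mem_coe, hGi] at hx
  rw [← SetLike.mem_coe, hGj] at hy
  obtain ⟨m, hm, hxm⟩ := hx
  obtain ⟨n, hn, hyn⟩ := hy
  set N := (⊤ : Subgroup G).lowerCentralSeries (i + j + 1)
  have hcomm : Commute ((x : G ⧸ N) ^ m) ((y : G ⧸ N) ^ n) := by
    have hxy : ⁅x ^ m, y ^ n⁆ ∈ N :=
      Subgroup.commutator_lowerCentralSeries_le i j (Subgroup.commutator_mem_commutator hxm hyn)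
    rwa [← QuotientGroup.eq_one_iff, QuotientGroup.mk_commutatorElement, QuotientGroup.mk_pow,
      QuotientGroup.mk_pow, commutatorElement_eq_one_iff_commute] at hxy
  obtain ⟨r, hr, hxyr⟩ := Subgroup.isPiTorsion_commutatorElement_of_commute_pow hm hn hcomm
  rw [← SetLike.mem_coe, hGk]
  refine ⟨r, hr, (QuotientGroup.eq_one_iff _).mp ?_⟩
  rwa [QuotientGroup.mk_pow, QuotientGroup.mk_commutatorElement]

/-- `lowerCentralSeries G i` is `γ_{i+1}(G)` in the paper's indexing, so the claim
`[G_i, G_j] ≤ G_{i+j}` (for `i, j ≥ 1`) becomes the statement below. -/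
theorem isolator_commutator_le (G : Type*) [Group G] [Group.IsNilpotent G]
    (π : Set ℕ) (i j : ℕ) (Gi Gj Gk : Subgroup G)
    (hGi : (Gi : Set G) = {g : G | ∃ n : ℕ, IsPiNumber π n ∧ g ^ n ∈ (⊤ : Subgroup G).lowerCentralSeries i})
    (hGj : (Gj : Set G) = {g : G | ∃ n : ℕ, IsPiNumber π n ∧ g ^ n ∈ (⊤ : Subgroup G).lowerCentralSeries j})
    (hGk : (Gk : Set G) =
      {g : G | ∃ n : ℕ, IsPiNumber π n ∧ g ^ n ∈ (⊤ : Subgroup G).lowerCentralSeries (i + j + 1)}) :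
    ⁅Gi, Gj⁆ ≤ Gk :=
  isolator_commutator_le_general G π i j Gi Gj Gk hGi hGj hGk
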